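/- arXiv:1411.3065 — 2 statements merged into one kernel-verified Lean document; each statement's English description precedes it below -/
import Mathlib

section
/- For every integer i with 1 ≤ i ≤ n, one has the factorization f_{i,1} = (x_1 − t) · ∏_{ℓ=2}^{i} (x_1 − x_ℓ − t) in ℚ[x_1,…,x_n,t], where for i = 1 the empty product is taken to be 1. -/
open MvPolynomial Finset

/-- The variable `t` in `ℚ[x_1,…,x_n,t]`, realized as `MvPolynomial (Option (Fin n)) ℚ`
with `t = X none`. -/
noncomputable def tv (n : ℕ) : MvPolynomial (Option (Fin n)) ℚ := X none

/-- The variable `x_k` (for `1 ≤ k ≤ n`) in `ℚ[x_1,…,x_n,t]`. -/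
noncomputable def xv (n : ℕ) (k : ℕ) : MvPolynomial (Option (Fin n)) ℚ :=
  if h : k - 1 < n then X (some ⟨k - 1, h⟩) else 0

/-- `p_i = ∑_{k=1}^i (x_k - k t)`, with `p_0 = 0`. -/
noncomputable def pp (n : ℕ) (i : ℕ) : MvPolynomial (Option (Fin n)) ℚ :=
  ∑ k ∈ Finset.range i, (xv n (k + 1) - C ((k : ℚ) + 1) * tv n)

/-- The polynomials `f_{i,j}`: `f_{i,0} = 0`, `f_{j,j} = p_j`, and
`f_{i,j} = f_{i-1,j-1} + (x_j - x_i - t) f_{i-1,j}` for `i > j ≥ 1`. -/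
noncomputable def ff (n : ℕ) : ℕ → ℕ → MvPolynomial (Option (Fin n)) ℚ
  | _, 0 => 0
  | 0, _ + 1 => 0
  | i + 1, j + 1 =>
      if i = j then pp n (j + 1)
      else ff n i j + (xv n (j + 1) - xv n (i + 1) - tv n) * ff n i (j + 1)


theorem ff_zero_right (n i : ℕ) : ff n i 0 = 0 := by
  cases i <;> rfl

theorem ff_one_one (n : ℕ) : ff n 1 1 = xv n 1 - tv n := by
  simp [ff, pp]

theorem ff_succ_succ_of_ne (n : ℕ) {i j : ℕ} (h : i ≠ j) :
    ff n (i + 1) (j + 1) = ff n i j + (xv n (j + 1) - xv n (i + 1) - tv n) * ff n i (j + 1) := by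
  rw [ff, if_neg h]

theorem ff_succ_one (n : ℕ) {i : ℕ} (hi : 1 ≤ i) :
    ff n (i + 1) 1 = (xv n 1 - xv n (i + 1) - tv n) * ff n i 1 := by
  rw [ff_succ_succ_of_ne n (by omega : i ≠ 0), ff_zero_right, zero_add]

theorem stmt4_general (n : ℕ) (i : ℕ) (h1 : 1 ≤ i) :
    ff n i 1 = (xv n 1 - tv n) * ∏ l ∈ Finset.Icc 2 i, (xv n 1 - xv n l - tv n) := by
  induction i, h1 using Nat.le_induction with
  | base => simp [ff_one_one]
  | succ i hi ih =>
    rw [ff_succ_one n hi, ih, prod_Icc_succ_top (by omega : 2 ≤ i + 1)]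
    ring

/-- For `1 ≤ i ≤ n`, `f_{i,1} = (x_1 - t) ∏_{ℓ=2}^{i} (x_1 - x_ℓ - t)` (with the empty
product equal to `1` when `i = 1`). -/
theorem stmt4 (n : ℕ) (i : ℕ) (h1 : 1 ≤ i) (h2 : i ≤ n) :
    ff n i 1 = (xv n 1 - tv n) * ∏ l ∈ Finset.Icc 2 i, (xv n 1 - xv n l - tv n) :=
  stmt4_general n i h1
end

section
/- For every integer j with 1 ≤ j ≤ n−1, one has the identity f_{j+1,j} = f_{j,j−1} + (−p_{j−1} + 2p_j − p_{j+1} − 2t)·p_j in ℚ[x_1,…,x_n,t]. -/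
open MvPolynomial Finset

theorem pp_succ (n i : ℕ) :
    pp n (i + 1) = pp n i + (xv n (i + 1) - C ((i : ℚ) + 1) * tv n) :=
  Finset.sum_range_succ _ _

theorem ff_self (n j : ℕ) : ff n (j + 1) (j + 1) = pp n (j + 1) := by
  simp [ff]

theorem ff_succ_of_ne (n : ℕ) {i j : ℕ} (hij : i ≠ j) :
    ff n (i + 1) (j + 1) =
      ff n i j + (xv n (j + 1) - xv n (i + 1) - tv n) * ff n i (j + 1) := by
  simp [ff, hij]

theorem ff_add_two_add_one (n j : ℕ) :
    ff n (j + 2) (j + 1) =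
      ff n (j + 1) j + (xv n (j + 1) - xv n (j + 2) - tv n) * pp n (j + 1) := by
  rw [ff_succ_of_ne n (by omega : j + 1 ≠ j), ff_self]

/-- The `t`-coefficients of consecutive increments `x_k - k t` of `p` differ by exactly one. -/
theorem neg_pp_add_two_mul_pp_sub_pp_sub_two_mul_tv (n j : ℕ) :
    -pp n j + 2 * pp n (j + 1) - pp n (j + 2) - 2 * tv n = xv n (j + 1) - xv n (j + 2) - tv n := by
  rw [pp_succ n (j + 1), pp_succ n j]
  push_cast
  simp only [map_add, map_one, map_natCast]
  ring

theorem stmt5_general (n : ℕ) (j : ℕ) (h1 : 1 ≤ j) :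
    ff n (j + 1) j =
      ff n j (j - 1) +
        (-(pp n (j - 1)) + 2 * pp n j - pp n (j + 1) - 2 * tv n) * pp n j := by
  obtain ⟨k, rfl⟩ : ∃ k, j = k + 1 := ⟨j - 1, by omega⟩
  rw [Nat.add_sub_cancel, neg_pp_add_two_mul_pp_sub_pp_sub_two_mul_tv]
  exact ff_add_two_add_one n k

/-- For `1 ≤ j ≤ n - 1`,
`f_{j+1,j} = f_{j,j-1} + (-p_{j-1} + 2 p_j - p_{j+1} - 2t) p_j`. -/
theorem stmt5 (n : ℕ) (hn : 2 ≤ n) (j : ℕ) (h1 : 1 ≤ j) (h2 : j ≤ n - 1) :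
    ff n (j + 1) j =
      ff n j (j - 1) +
        (-(pp n (j - 1)) + 2 * pp n j - pp n (j + 1) - 2 * tv n) * pp n j :=
  stmt5_general n j h1
end
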